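/- arXiv:1206.6688 — 4 statements merged into one kernel-verified Lean document; each statement's English description precedes it below -/
import Mathlib

section
/- Under the Misiurewicz assumption, |λ0| > 1/e. -/
open Function

/-- `Df f k z = ∏_{j=1}^k f^j(z)`, the derivative of the k-th iterate of
`f(z) = λ·exp z` at `z`. -/
noncomputable def Df (f : ℂ → ℂ) (k : ℕ) (z : ℂ) : ℂ :=
  ∏ j ∈ Finset.range k, f^[j + 1] z

/-- The post-singular set of `f`: the closure of the forward orbit of `0`. -/
def postSing (f : ℂ → ℂ) : Set ℂ :=
  closure (Set.range fun n => f^[n] (0 : ℂ))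

open Metric Set

/-! If `|λ| ≤ 1/e`, then `z ↦ λ e^z` maps the closed unit disc into itself, so the
post-singular orbit of `0` stays there and all derivatives `Df^n(0)` along it have modulus at
most `1`; this contradicts the expansion `|Df^{n₀}| > e^α > 1` at `0 ∈ P(f)`. -/

theorem norm_mul_exp_le_one {lam z : ℂ} (hlam : ‖lam‖ ≤ 1 / Real.exp 1) (hz : ‖z‖ ≤ 1) :
    ‖lam * Complex.exp z‖ ≤ 1 := by
  rw [norm_mul, Complex.norm_exp]
  calc ‖lam‖ * Real.exp z.re ≤ 1 / Real.exp 1 * Real.exp 1 := by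
        gcongr
        exact (Complex.re_le_norm z).trans hz
    _ = 1 := by field_simp

theorem norm_Df_le_one {f : ℂ → ℂ} (hf : MapsTo f (closedBall 0 1) (closedBall 0 1))
    (k : ℕ) {z : ℂ} (hz : z ∈ closedBall 0 1) : ‖Df f k z‖ ≤ 1 := by
  rw [Df, norm_prod]
  refine Finset.prod_le_one (fun _ _ => norm_nonneg _) fun j _ => ?_
  simpa using hf.iterate (j + 1) hz

theorem zero_mem_postSing (f : ℂ → ℂ) : (0 : ℂ) ∈ postSing f :=
  subset_closure ⟨0, rfl⟩

theorem stmt_0_general (lam : ℂ) (f : ℂ → ℂ)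
    (hf : ∀ z, f z = lam * Complex.exp z)
    (n0 : ℕ) (α : ℝ) (hα : 0 < α)
    (hrep : ∀ z ∈ postSing f, Real.exp α < ‖Df f n0 z‖) :
    1 / Real.exp 1 < ‖lam‖ := by
  by_contra! hlam
  have hmaps : MapsTo f (closedBall 0 1) (closedBall 0 1) := fun z hz => by
    simpa [hf] using norm_mul_exp_le_one hlam (by simpa using hz)
  have hsmall : ‖Df f n0 0‖ ≤ 1 := norm_Df_le_one hmaps n0 (by simp)
  have hbig : 1 < ‖Df f n0 0‖ :=
    (Real.one_lt_exp_iff.mpr hα).trans (hrep 0 (zero_mem_postSing f))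
  linarith

/-- under the Misiurewicz assumption, `|λ0| > 1/e`. -/
theorem stmt_0 (lam : ℂ) (hlam : lam ≠ 0) (f : ℂ → ℂ)
    (hf : ∀ z, f z = lam * Complex.exp z)
    (hPbdd : Bornology.IsBounded (postSing f))
    (n0 : ℕ) (hn0 : 1 ≤ n0) (α : ℝ) (hα : 0 < α)
    (hrep : ∀ z ∈ postSing f, Real.exp α < ‖Df f n0 z‖) :
    1 / Real.exp 1 < ‖lam‖ :=
  stmt_0_general lam f hf n0 α hα hrep
end

section
/- Under the Misiurewicz assumption, for every δ > 0 there exists β > 0 such that for every z ∈ ℂ and every integer k ≥ 0, if the distance from f^k(z) to P(f) is greater than δ, then |Df^k(z)| > β. -/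
open Function Metric

/-!
Put `a = f^k z`. The disc of radius `δ` about `a` misses the orbit of `0`, the only singular value
of `f`, so taking logarithms `k` times gives a holomorphic branch `g` of `f^{-k}` on that disc with
`g a = z`, and `Df^k(z) = 1 / g'(a)`. Since `f` has period `2πi`, `exp ∘ g` is injective, so the
image of `g` contains no disc of radius `> π`. Bloch's theorem then bounds `|g'(a)|` by `128π/δ`.
-/

open Complex Set Filter Topology
open scoped Real

theorem DifferentiableOn.exists_exp_comp_eqOn_ball {c : ℂ} {r : ℝ} {h : ℂ → ℂ}
    (hd : DifferentiableOn ℂ h (ball c r)) (hne : ∀ u ∈ ball c r, h u ≠ 0)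
    {z₀ : ℂ} (hz₀ : Complex.exp z₀ = h c) :
    ∃ L : ℂ → ℂ, DifferentiableOn ℂ L (ball c r) ∧ L c = z₀ ∧
      EqOn (Complex.exp ∘ L) h (ball c r) := by
  obtain ⟨L, hLc, hL⟩ :=
    (((hd.deriv isOpen_ball).div hd hne).isExactOn_ball).with_val_at c z₀
  refine ⟨L, fun u hu ↦ (hL u hu).differentiableAt.differentiableWithinAt, hLc, fun u hu ↦ ?_⟩
  -- `h · exp (-L)` has derivative `0`, so it keeps its value `1` at `c`.
  have hG : ∀ x ∈ ball c r, HasDerivAt (fun x ↦ h x * Complex.exp (-L x)) 0 x := by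
    intro x hx
    have hh := (hd.differentiableAt (isOpen_ball.mem_nhds hx)).hasDerivAt
    refine (hh.fun_mul (hL x hx).fun_neg.cexp).congr_deriv ?_
    rw [Pi.div_apply]
    field_simp [hne x hx]
    ring
  have hconst := isOpen_ball.is_const_of_deriv_eq_zero (convex_ball c r).isPreconnected
    (fun x hx ↦ (hG x hx).differentiableAt.differentiableWithinAt) (fun x hx ↦ (hG x hx).deriv)
    hu (mem_ball_self (pos_of_mem_ball hu))
  simp only [hLc, ← hz₀, ← exp_add, add_neg_cancel, exp_zero] at hconst
  rw [exp_neg, mul_inv_eq_one₀ (exp_ne_zero _)] at hconst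
  exact hconst.symm

theorem norm_sub_sub_deriv_mul_le_of_mapsTo_ball {h : ℂ → ℂ} {p u : ℂ} {t M : ℝ}
    (hd : DifferentiableOn ℂ h (ball p t)) (hM : MapsTo h (ball p t) (closedBall (h p) M))
    (hu : u ∈ ball p t) :
    ‖h u - h p - deriv h p * (u - p)‖ ≤ 2 * M / t ^ 2 * ‖u - p‖ ^ 2 := by
  have hp : p ∈ ball p t := mem_ball_self (pos_of_mem_ball hu)
  set F := dslope h p
  have hFd : DifferentiableOn ℂ F (ball p t) :=
    (differentiableOn_dslope (isOpen_ball.mem_nhds hp)).2 hd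
  have hF : ∀ v ∈ ball p t, ‖F v‖ ≤ M / t := fun v hv ↦ norm_dslope_le_div_of_mapsTo_ball hd hM hv
  have hFM : MapsTo F (ball p t) (closedBall (F p) (2 * M / t)) := fun v hv ↦ by
    rw [mem_closedBall, dist_eq_norm]
    have htwo : 2 * M / t = M / t + M / t := by ring
    linarith [norm_sub_le (F v) (F p), hF v hv, hF p hp]
  have hremainder : h u - h p - deriv h p * (u - p) = dslope F p u * (u - p) ^ 2 := by
    have hh : (u - p) * F u = h u - h p := sub_smul_dslope h p u
    have hF : (u - p) * dslope F p u = F u - deriv h p := by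
      rw [← dslope_same h p]; exact sub_smul_dslope F p u
    linear_combination -hh - (u - p) * hF
  rw [hremainder, norm_mul, norm_pow]
  gcongr
  calc ‖dslope F p u‖ ≤ 2 * M / t / t := norm_dslope_le_div_of_mapsTo_ball hFd hFM hu
    _ = 2 * M / t ^ 2 := by ring

theorem ball_subset_image_ball_of_mapsTo {h : ℂ → ℂ} {p : ℂ} {t M : ℝ}
    (hd : DifferentiableOn ℂ h (ball p t)) (ht : 0 < t)
    (hM : MapsTo h (ball p t) (closedBall (h p) M)) (hder : deriv h p ≠ 0) :
    ball (h p) (‖deriv h p‖ ^ 2 * t ^ 2 / (16 * M)) ⊆ h '' ball p t := by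
  set μ := ‖deriv h p‖
  have hμ : 0 < μ := norm_pos_iff.2 hder
  have hμM : μ ≤ M / t := norm_deriv_le_div_of_mapsTo_ball hd hM ht
  rw [le_div_iff₀ ht] at hμM
  have hM0 : 0 < M := (by positivity : 0 < μ * t).trans_le hμM
  -- on the circle of radius `r` the linear term dominates the quadratic remainder
  set r := μ * t ^ 2 / (4 * M)
  have hr : 0 < r := by positivity
  have hrt : r < t := by
    rw [div_lt_iff₀ (by positivity)]
    nlinarith
  have hsphere : ∀ u ∈ sphere p r, μ * r / 2 ≤ ‖h u - h p‖ := by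
    intro u hu
    have hur : ‖u - p‖ = r := mem_sphere_iff_norm.1 hu
    have hrem := norm_sub_sub_deriv_mul_le_of_mapsTo_ball hd hM
      (closedBall_subset_ball hrt (sphere_subset_closedBall hu))
    have hquad : 2 * M / t ^ 2 * r ^ 2 = μ * r / 2 := by simp only [r]; field_simp; ring
    rw [hur, hquad] at hrem
    have htri := norm_sub_le (h u - h p) (h u - h p - deriv h p * (u - p))
    rw [sub_sub_cancel, norm_mul, hur] at htri
    linarith
  have hnonconst : ∃ᶠ z in 𝓝 p, h z ≠ h p := fun hconst ↦ hder <| by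
    have hloc : h =ᶠ[𝓝 p] fun _ ↦ h p := hconst.mono fun z hz ↦ not_not.1 hz
    rw [hloc.deriv_eq, deriv_const]
  calc ball (h p) (μ ^ 2 * t ^ 2 / (16 * M)) = ball (h p) (μ * r / 2 / 2) := by
        congr 1; simp only [r]; field_simp; ring
    _ ⊆ h '' closedBall p r :=
        (hd.diffContOnCl_ball (closedBall_subset_ball hrt)).ball_subset_image_closedBall hr
          hsphere hnonconst
    _ ⊆ h '' ball p t := image_mono (closedBall_subset_ball hrt)

/-- The rescaling step of Bloch's theorem: `p` maximizes `(δ/2 - |u - a|) |g' u|` on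
`closedBall a (δ/2)`, and `t` is half the distance from `p` to the boundary. -/
theorem exists_ball_norm_deriv_le_two_mul {g : ℂ → ℂ} {a : ℂ} {δ : ℝ} (hδ : 0 < δ)
    (hg : DifferentiableOn ℂ g (ball a δ)) (hder : deriv g a ≠ 0) :
    ∃ p t, 0 < t ∧ ball p t ⊆ ball a δ ∧ (∀ u ∈ ball p t, ‖deriv g u‖ ≤ 2 * ‖deriv g p‖) ∧
      δ * ‖deriv g a‖ ≤ 4 * t * ‖deriv g p‖ := by
  set ρ : ℂ → ℝ := fun u ↦ (δ / 2 - dist u a) * ‖deriv g u‖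
  have hρ : ContinuousOn ρ (closedBall a (δ / 2)) :=
    (continuousOn_const.sub (continuous_id.dist continuous_const).continuousOn).mul
      ((hg.deriv isOpen_ball).continuousOn.mono (closedBall_subset_ball (by linarith))).norm
  obtain ⟨p, hp, hmax⟩ := (isCompact_closedBall a (δ / 2)).exists_isMaxOn
    (nonempty_closedBall.2 (by positivity)) hρ
  have hρa : δ / 2 * ‖deriv g a‖ ≤ ρ p := by
    simpa [ρ] using hmax (mem_closedBall_self (by positivity : 0 ≤ δ / 2))
  have hpa : dist p a < δ / 2 := by
    by_contra! hfar
    have : ρ p ≤ 0 := mul_nonpos_of_nonpos_of_nonneg (by linarith) (norm_nonneg _)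
    have : 0 < δ / 2 * ‖deriv g a‖ := by positivity
    linarith
  set t := (δ / 2 - dist p a) / 2
  have ht : 2 * t = δ / 2 - dist p a := by ring
  have hρp : ρ p = 2 * t * ‖deriv g p‖ := by ring
  refine ⟨p, t, by positivity, fun u hu ↦ ?_, fun u hu ↦ ?_, by linarith⟩
  · rw [mem_ball] at hu ⊢
    linarith [dist_triangle u p a]
  · have hua : dist u a < dist p a + t := by linarith [dist_triangle u p a, mem_ball.1 hu]
    have hρu : ρ u ≤ ρ p := hmax (mem_closedBall.2 (by linarith))
    have htu : t * ‖deriv g u‖ ≤ ρ u :=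
      mul_le_mul_of_nonneg_right (by linarith) (norm_nonneg _)
    refine le_of_mul_le_mul_left ?_ (by positivity : 0 < t)
    linarith

/-- Bloch's theorem, with the constant `1/128`. -/
theorem exists_ball_subset_image_ball {g : ℂ → ℂ} {a : ℂ} {δ : ℝ} (hδ : 0 < δ)
    (hg : DifferentiableOn ℂ g (ball a δ)) :
    ∃ q, ball q (δ * ‖deriv g a‖ / 128) ⊆ g '' ball a δ := by
  by_cases hder : deriv g a = 0
  · exact ⟨g a, by simp [hder]⟩
  obtain ⟨p, t, ht, hpt, hbound, hpa⟩ := exists_ball_norm_deriv_le_two_mul hδ hg hder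
  have hdp : DifferentiableOn ℂ g (ball p t) := hg.mono hpt
  have hderp : deriv g p ≠ 0 := by
    rintro hzero
    rw [hzero, norm_zero, mul_zero] at hpa
    exact (by positivity : 0 < δ * ‖deriv g a‖).not_ge hpa
  have hmaps : MapsTo g (ball p t) (closedBall (g p) (2 * ‖deriv g p‖ * t)) := fun u hu ↦ by
    rw [mem_closedBall, dist_eq_norm]
    calc ‖g u - g p‖ ≤ 2 * ‖deriv g p‖ * ‖u - p‖ :=
          (convex_ball p t).norm_image_sub_le_of_norm_deriv_le
            (fun x hx ↦ hdp.differentiableAt (isOpen_ball.mem_nhds hx)) hbound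
            (mem_ball_self ht) hu
      _ ≤ 2 * ‖deriv g p‖ * t := by gcongr; exact (mem_ball_iff_norm.1 hu).le
  refine ⟨g p, (ball_subset_ball ?_).trans
    ((ball_subset_image_ball_of_mapsTo hdp ht hmaps hderp).trans (image_mono hpt))⟩
  have hν : 0 < ‖deriv g p‖ := norm_pos_iff.2 hderp
  rw [show ‖deriv g p‖ ^ 2 * t ^ 2 / (16 * (2 * ‖deriv g p‖ * t)) = 4 * t * ‖deriv g p‖ / 128 by
    field_simp; ring]
  gcongr

theorem norm_deriv_le_of_injOn_exp_comp {g : ℂ → ℂ} {a : ℂ} {δ : ℝ} (hδ : 0 < δ)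
    (hg : DifferentiableOn ℂ g (ball a δ)) (hinj : InjOn (exp ∘ g) (ball a δ)) :
    ‖deriv g a‖ ≤ 128 * π / δ := by
  obtain ⟨q, hq⟩ := exists_ball_subset_image_ball hδ hg
  rw [le_div_iff₀ hδ]
  by_contra! hlarge
  -- otherwise the image of `g` contains two points differing by `2πi`
  have hmem : ∀ w : ℂ, ‖w‖ = π → q + w ∈ g '' ball a δ := fun w hw ↦ hq <| by
    rw [mem_ball_iff_norm, add_sub_cancel_left, hw]
    linarith
  obtain ⟨u₁, hu₁, hgu₁⟩ := hmem (π * I) (by simp [Real.pi_nonneg])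
  obtain ⟨u₂, hu₂, hgu₂⟩ := hmem (-(π * I)) (by simp [Real.pi_nonneg])
  have hexp : (exp ∘ g) u₁ = (exp ∘ g) u₂ := by
    simp only [comp_apply, hgu₁, hgu₂, exp_add_pi_mul_I, ← sub_eq_add_neg, exp_sub_pi_mul_I]
  have hq := hgu₁.symm.trans ((congrArg g (hinj hu₁ hu₂ hexp)).trans hgu₂)
  have h2πI : 2 * (π : ℂ) * I = 0 := by linear_combination hq
  simp [Real.pi_ne_zero, I_ne_zero] at h2πI

theorem hasDerivAt_iterate_Df {f : ℂ → ℂ} (hf : ∀ z, HasDerivAt f (f z) z) (k : ℕ) (z : ℂ) :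
    HasDerivAt f^[k] (Df f k z) z := by
  induction k generalizing z with
  | zero => simpa [Df] using hasDerivAt_id z
  | succ k ih =>
    rw [iterate_succ']
    refine ((hf _).comp z (ih z)).congr_deriv ?_
    rw [Df, Df, Finset.prod_range_succ, iterate_succ_apply', mul_comm]

theorem Df_ne_zero {f : ℂ → ℂ} (hf : ∀ z, f z ≠ 0) (k : ℕ) (z : ℂ) : Df f k z ≠ 0 :=
  Finset.prod_ne_zero_iff.2 fun j _ ↦ by rw [iterate_succ_apply']; exact hf _

theorem exists_rightInverse_iterate_on_ball {lam : ℂ} (hlam : lam ≠ 0) {f : ℂ → ℂ}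
    (hf : ∀ z, f z = lam * exp z) {a : ℂ} {δ : ℝ} (hP : ∀ n, f^[n] 0 ∉ ball a δ) (k : ℕ) {z : ℂ}
    (hz : f^[k] z = a) :
    ∃ g : ℂ → ℂ, DifferentiableOn ℂ g (ball a δ) ∧ g a = z ∧
      ∀ u ∈ ball a δ, f^[k] (g u) = u := by
  induction k generalizing z with
  | zero => exact ⟨id, differentiableOn_id, hz.symm, fun u _ ↦ rfl⟩
  | succ k ih =>
    obtain ⟨g, hgd, hga, hg⟩ := ih (z := f z) hz
    have hg0 : ∀ u ∈ ball a δ, lam⁻¹ * g u ≠ 0 := fun u hu hgu ↦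
      hP k (by rwa [← (mul_eq_zero.1 hgu).resolve_left (inv_ne_zero hlam), hg u hu])
    obtain ⟨L, hLd, hLa, hL⟩ := (hgd.const_mul lam⁻¹).exists_exp_comp_eqOn_ball hg0
      (by rw [hga, hf, inv_mul_cancel_left₀ hlam])
    refine ⟨L, hLd, hLa, fun u hu ↦ ?_⟩
    rw [iterate_succ_apply, hf, ← comp_apply (f := exp), hL hu, mul_inv_cancel_left₀ hlam, hg u hu]

theorem injOn_exp_comp_of_iterate_comp {lam : ℂ} {f : ℂ → ℂ} (hf : ∀ z, f z = lam * exp z)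
    {g : ℂ → ℂ} {s : Set ℂ} {k : ℕ} (hk : k ≠ 0) (hg : ∀ u ∈ s, f^[k] (g u) = u) :
    InjOn (exp ∘ g) s := by
  obtain ⟨k, rfl⟩ := Nat.exists_eq_succ_of_ne_zero hk
  intro u₁ hu₁ u₂ hu₂ hexp
  rw [← hg u₁ hu₁, ← hg u₂ hu₂, iterate_succ_apply, iterate_succ_apply, hf, hf]
  exact congrArg _ (congrArg _ hexp)

theorem stmt_1_general (lam : ℂ) (hlam : lam ≠ 0) (f : ℂ → ℂ)
    (hf : ∀ z, f z = lam * Complex.exp z) :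
    ∀ δ : ℝ, 0 < δ → ∃ β : ℝ, 0 < β ∧ ∀ (z : ℂ) (k : ℕ),
      δ < infDist (f^[k] z) (postSing f) → β < ‖Df f k z‖ := by
  intro δ hδ
  refine ⟨min (1 / 2) (δ / (256 * π)), by positivity, fun z k hdist ↦ ?_⟩
  rcases Nat.eq_zero_or_pos k with rfl | hk
  · rw [Df, Finset.prod_range_zero, norm_one]
    exact (min_le_left _ _).trans_lt one_half_lt_one
  have hP : ∀ n, f^[n] 0 ∉ ball (f^[k] z) δ := fun n hn ↦
    (infDist_le_dist_of_mem (subset_closure (mem_range_self n) : f^[n] 0 ∈ postSing f)).not_gt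
      ((mem_ball'.1 hn).trans hdist)
  obtain ⟨g, hgd, hga, hg⟩ := exists_rightInverse_iterate_on_ball hlam hf hP k rfl
  have hnhds : ball (f^[k] z) δ ∈ 𝓝 (f^[k] z) := isOpen_ball.mem_nhds (mem_ball_self hδ)
  have hf' : ∀ w, HasDerivAt f (f w) w := fun w ↦ by
    rw [show f = fun w ↦ lam * exp w from funext hf]
    exact (hasDerivAt_exp w).const_mul lam
  have hDf : Df f k z ≠ 0 := Df_ne_zero (fun w ↦ hf w ▸ mul_ne_zero hlam (exp_ne_zero w)) k z
  have hderiv : HasDerivAt g (Df f k z)⁻¹ (f^[k] z) :=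
    .of_local_left_inverse (hgd.continuousOn.continuousAt hnhds)
      (by rw [hga]; exact hasDerivAt_iterate_Df hf' k z) hDf (eventually_of_mem hnhds hg)
  have hbound := norm_deriv_le_of_injOn_exp_comp hδ hgd
    (injOn_exp_comp_of_iterate_comp hf hk.ne' hg)
  rw [hderiv.deriv, norm_inv] at hbound
  calc min (1 / 2) (δ / (256 * π)) ≤ δ / (256 * π) := min_le_right _ _
    _ < δ / (128 * π) := by gcongr; norm_num
    _ ≤ ‖Df f k z‖ := by
        rw [← inv_div]
        exact inv_le_of_inv_le₀ (norm_pos_iff.2 hDf) hbound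

/-- if `dist(f^k(z), P(f)) > δ` then `|Df^k(z)| > β`. -/
theorem stmt_1 (lam : ℂ) (hlam : lam ≠ 0) (f : ℂ → ℂ)
    (hf : ∀ z, f z = lam * Complex.exp z)
    (hPbdd : Bornology.IsBounded (postSing f))
    (n0 : ℕ) (hn0 : 1 ≤ n0) (α : ℝ) (hα : 0 < α)
    (hrep : ∀ z ∈ postSing f, Real.exp α < ‖Df f n0 z‖) :
    ∀ δ : ℝ, 0 < δ → ∃ β : ℝ, 0 < β ∧ ∀ (z : ℂ) (k : ℕ),
      δ < infDist (f^[k] z) (postSing f) → β < ‖Df f k z‖ :=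
  stmt_1_general lam hlam f hf
end

section
/- Let λ0 ∈ ℂ \ {0} and f(z) = λ0·exp(z). There exists M > 0 such that for every y ≥ M and every square Q ∈ 𝒬 with Q ⊂ R(y) \ R(y+7), there is a subset S ⊂ Q such that f restricted to S is injective and f(S) is a square Q' ∈ 𝒬 with Q' ⊂ R(|λ0|·e^y/2) \ R(|λ0|·e^y·e^7). -/
/-!
`z ↦ λ₀ eᶻ` maps the grid square with real part in `[2kπ, 2kπ + 2π)` onto the annulus
`r ≤ |w| < r e^{2π}`, `r = |λ₀| e^{2kπ}`, since the imaginary parts of the square run over a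
full period. Once `r ≥ 1`, the grid square on the positive real axis starting at
`2π⌈r / 2π⌉` fits inside this annulus; a set of preimages of its points is the required `S`.
The conditions on `y` pin `r` between `|λ₀| eʸ` and `|λ₀| e^{y + 7 - π}`, which puts that
square in the prescribed strip.
-/

open Function Set

/-- The right half-plane `R(x) = {z : Re z > x}`. -/
def RHP (x : ℝ) : Set ℂ := {z : ℂ | x < z.re}

/-- A square of the grid `𝒬`. -/
def IsQSquare (Q : Set ℂ) : Prop :=
  ∃ j k : ℤ, Q = {z : ℂ | 2 * (k : ℝ) * Real.pi ≤ z.re ∧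
    z.re < (2 * (k : ℝ) + 2) * Real.pi ∧
    2 * (j : ℝ) * Real.pi ≤ z.im ∧ z.im < (2 * (j : ℝ) + 2) * Real.pi}

open Complex
open scoped Real

def gridStrip (k : ℤ) : Set ℝ := Ico (2 * k * π) (2 * k * π + 2 * π)

def qSquare (j k : ℤ) : Set ℂ := gridStrip k ×ℂ gridStrip j

def annulus (r R : ℝ) : Set ℂ := {w | ‖w‖ ∈ Ico r R}

lemma isQSquare_iff {Q : Set ℂ} : IsQSquare Q ↔ ∃ j k : ℤ, Q = qSquare j k := by
  have row (k : ℤ) (x : ℝ) : x ∈ gridStrip k ↔ 2 * k * π ≤ x ∧ x < (2 * k + 2) * π := by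
    rw [gridStrip, mem_Ico, add_mul]
  simp only [IsQSquare, qSquare, Set.ext_iff, mem_reProdIm, row, mem_ofPred_eq, and_assoc]

lemma Complex.surjOn_exp_annulus (a b c : ℝ) :
    SurjOn exp (Ico a b ×ℂ Ico c (c + 2 * π)) (annulus (Real.exp a) (Real.exp b)) := by
  intro w ⟨hlo, hhi⟩
  have hw : w ≠ 0 := norm_pos_iff.1 ((Real.exp_pos a).trans_le hlo)
  set n := toIcoDiv Real.two_pi_pos c (arg w)
  refine ⟨log w - n * (2 * π * I), ⟨?_, ?_⟩, ?_⟩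
  · show (log w - n * (2 * π * I)).re ∈ Ico a b
    have : (log w - n * (2 * π * I)).re = Real.log ‖w‖ := by simp [log_re]
    rw [this]
    exact ⟨(Real.le_log_iff_exp_le (norm_pos_iff.2 hw)).2 hlo,
      (Real.log_lt_iff_lt_exp (norm_pos_iff.2 hw)).2 hhi⟩
  · show (log w - n * (2 * π * I)).im ∈ Ico c (c + 2 * π)
    have : (log w - n * (2 * π * I)).im = arg w - n • (2 * π) := by simp [log_im]
    rw [this, self_sub_toIcoDiv_zsmul]
    exact toIcoMod_mem_Ico _ _ _
  · rw [exp_sub, exp_int_mul_two_pi_mul_I, div_one, exp_log hw]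

lemma Complex.surjOn_const_mul_exp_annulus {lam : ℂ} (hlam : lam ≠ 0) (a b c : ℝ) :
    SurjOn (fun z => lam * exp z) (Ico a b ×ℂ Ico c (c + 2 * π))
      (annulus (‖lam‖ * Real.exp a) (‖lam‖ * Real.exp b)) := by
  intro w ⟨hlo, hhi⟩
  have hL : 0 < ‖lam‖ := norm_pos_iff.2 hlam
  obtain ⟨z, hz, hzw⟩ := surjOn_exp_annulus a b c (show w / lam ∈ _ from
    ⟨by rwa [norm_div, le_div_iff₀' hL], by rwa [norm_div, div_lt_iff₀' hL]⟩)
  exact ⟨z, hz, by simp only [hzw, mul_div_cancel₀ _ hlam]⟩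

lemma re_mem_Ico_of_mem_qSquare_ceil {r : ℝ} {j : ℤ} {w : ℂ}
    (hw : w ∈ qSquare j ⌈r / (2 * π)⌉) : r ≤ w.re ∧ w.re < r + 4 * π := by
  obtain ⟨⟨h1, h2⟩, -⟩ := hw
  have hc1 := Int.le_ceil (r / (2 * π))
  have hc2 := Int.ceil_lt_add_one (r / (2 * π))
  rw [div_le_iff₀ (by positivity)] at hc1
  rw [← sub_lt_iff_lt_add, lt_div_iff₀ (by positivity)] at hc2
  constructor <;> linarith

lemma qSquare_ceil_subset_annulus {r : ℝ} (hr : 1 ≤ r) :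
    qSquare 0 ⌈r / (2 * π)⌉ ⊆ annulus r (r * Real.exp (2 * π)) := by
  intro w hw
  obtain ⟨hre1, hre2⟩ := re_mem_Ico_of_mem_qSquare_ceil hw
  obtain ⟨-, him1, him2⟩ := hw
  simp only [Int.cast_zero, mul_zero, zero_mul, zero_add] at him1 him2
  have hexp := Real.quadratic_le_exp_of_nonneg (by positivity : 0 ≤ 2 * π)
  refine ⟨hre1.trans (re_le_norm w), ?_⟩
  calc ‖w‖ ≤ |w.re| + |w.im| := norm_le_abs_re_add_abs_im w
    _ < r + 6 * π := by
      rw [abs_of_nonneg (by linarith [Real.pi_pos]), abs_of_nonneg him1]; linarith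
    _ ≤ r * Real.exp (2 * π) := by nlinarith [Real.pi_gt_three]

lemma lt_and_le_of_qSquare_subset_RHP_diff {j k : ℤ} {y : ℝ}
    (h : qSquare j k ⊆ RHP y \ RHP (y + 7)) : y < 2 * k * π ∧ 2 * k * π + π ≤ y + 7 := by
  have hcorner : (⟨2 * k * π, 2 * j * π⟩ : ℂ) ∈ qSquare j k :=
    ⟨⟨le_rfl, by linarith [Real.pi_pos]⟩, ⟨le_rfl, by linarith [Real.pi_pos]⟩⟩
  have hcentre : (⟨2 * k * π + π, 2 * j * π⟩ : ℂ) ∈ qSquare j k :=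
    ⟨⟨by linarith [Real.pi_pos], by linarith [Real.pi_pos]⟩, ⟨le_rfl, by linarith [Real.pi_pos]⟩⟩
  exact ⟨(h hcorner).1, not_lt.1 (h hcentre).2⟩

lemma exp_seven_sub_pi_add_four_pi_le : Real.exp (7 - π) + 4 * π ≤ Real.exp 7 := by
  have h7 := Real.quadratic_le_exp_of_nonneg (by norm_num : (0 : ℝ) ≤ 7)
  have hpi : 2 ≤ Real.exp π := by linarith [Real.add_one_le_exp π, Real.pi_gt_three]
  have : Real.exp (7 - π) * Real.exp π = Real.exp 7 := by rw [← Real.exp_add, sub_add_cancel]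
  nlinarith [Real.pi_le_four, Real.exp_pos (7 - π)]

/-- there is `M > 0` such that any square `Q ∈ 𝒬` with
`Q ⊆ R(y) \ R(y+7)`, `y ≥ M`, contains a subset mapped injectively by `f` onto a
square `Q' ∈ 𝒬` with `Q' ⊆ R(|λ0|e^y/2) \ R(|λ0|e^y·e^7)`. -/
theorem stmt_11 (lam : ℂ) (hlam : lam ≠ 0) (f : ℂ → ℂ)
    (hf : ∀ z, f z = lam * Complex.exp z) :
    ∃ M : ℝ, 0 < M ∧ ∀ y : ℝ, M ≤ y → ∀ Q : Set ℂ, IsQSquare Q →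
      Q ⊆ RHP y \ RHP (y + 7) →
      ∃ S : Set ℂ, S ⊆ Q ∧ InjOn f S ∧
        ∃ Q' : Set ℂ, IsQSquare Q' ∧ f '' S = Q' ∧
          Q' ⊆ RHP (‖lam‖ * Real.exp y / 2) \
               RHP (‖lam‖ * Real.exp y * Real.exp 7) := by
  obtain rfl : f = fun z => lam * exp z := funext hf
  have hL : 0 < ‖lam‖ := norm_pos_iff.2 hlam
  refine ⟨|Real.log ‖lam‖| + 1, by positivity, fun y hy Q hQ hQsub => ?_⟩
  obtain ⟨j, k, rfl⟩ := isQSquare_iff.1 hQ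
  obtain ⟨hyk, hky⟩ := lt_and_le_of_qSquare_subset_RHP_diff hQsub
  set A := ‖lam‖ * Real.exp y
  set r := ‖lam‖ * Real.exp (2 * k * π)
  have hA : 1 ≤ A := by
    show 1 ≤ ‖lam‖ * Real.exp y
    rw [← Real.exp_log hL, ← Real.exp_add]
    exact Real.one_le_exp (by linarith [neg_abs_le (Real.log ‖lam‖)])
  have hAr : A < r := mul_lt_mul_of_pos_left (Real.exp_lt_exp.2 hyk) hL
  have hrA : r ≤ A * Real.exp (7 - π) := by
    rw [mul_assoc, ← Real.exp_add]
    exact mul_le_mul_of_nonneg_left (Real.exp_le_exp.2 (by linarith)) hL.le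
  have hsurj : SurjOn (fun z => lam * exp z) (qSquare j k) (qSquare 0 ⌈r / (2 * π)⌉) := by
    refine (surjOn_const_mul_exp_annulus hlam _ _ _).mono subset_rfl
      ((qSquare_ceil_subset_annulus (hA.trans hAr.le)).trans ?_)
    rw [mul_assoc, ← Real.exp_add]
  obtain ⟨S, hSQ, hbij⟩ := surjOn_iff_exists_bijOn_subset.1 hsurj
  refine ⟨S, hSQ, hbij.injOn, _, isQSquare_iff.2 ⟨0, _, rfl⟩, hbij.image_eq, fun w hw => ?_⟩
  obtain ⟨hre1, hre2⟩ := re_mem_Ico_of_mem_qSquare_ceil hw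
  have hre_lt : w.re < A * Real.exp 7 := calc
    w.re < r + 4 * π := hre2
    _ ≤ A * (Real.exp (7 - π) + 4 * π) := by nlinarith [Real.pi_pos]
    _ ≤ A * Real.exp 7 := by gcongr; exact exp_seven_sub_pi_add_four_pi_le
  exact ⟨show A / 2 < w.re by linarith, not_lt.2 hre_lt.le⟩
end

section
/- Let γ, β ∈ (0, 1/10), let λ1, λ2 ∈ ℂ \ {0} satisfy |log(λ1/λ2)| < β, and set g_j(w) = λ_j·exp(w) for j = 1, 2. Suppose y, z, z' ∈ ℂ with z ≠ 0, g_1(z') = z, and |(y − z)/z| < γ. Then there exists y' ∈ ℂ with g_2(y') = y and |y' − z' − (y − z)/z| < 3γ² + β. -/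
/-!
Take `y' = z' + log (y / z) + log (λ₁ / λ₂)`: the last summand converts the multiplier `λ₂` into
`λ₁`, and then `λ₁ exp (z' + log (y / z)) = z · (y / z) = y`. With `u = (y - z) / z` we have
`y / z = 1 + u`, so `y' - z' - u = (log (1 + u) - u) + log (λ₁ / λ₂)`, and the Taylor remainder of
`log (1 + u)` is at most `‖u‖² < γ²` once `‖u‖ ≤ 1/2`.
-/

namespace Complex

theorem mul_exp_add_log_div {c d : ℂ} (hc : c ≠ 0) (hd : d ≠ 0) (w : ℂ) :
    d * exp (w + log (c / d)) = c * exp w := by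
  rw [exp_add, exp_log (div_ne_zero hc hd)]
  field_simp

theorem norm_log_one_add_sub_self_le_sq {u : ℂ} (hu : ‖u‖ ≤ 1 / 2) :
    ‖log (1 + u) - u‖ ≤ ‖u‖ ^ 2 := by
  have h_inv : (1 - ‖u‖)⁻¹ ≤ 2 := by
    rw [inv_le_comm₀ (by linarith) (by norm_num)]
    linarith
  calc ‖log (1 + u) - u‖ ≤ ‖u‖ ^ 2 * (1 - ‖u‖)⁻¹ / 2 :=
        norm_log_one_add_sub_self_le (by linarith)
    _ ≤ ‖u‖ ^ 2 * 2 / 2 := by gcongr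
    _ = ‖u‖ ^ 2 := by ring

theorem one_add_ne_zero_of_norm_lt_one {u : ℂ} (hu : ‖u‖ < 1) : 1 + u ≠ 0 := by
  intro h
  rw [eq_neg_of_add_eq_zero_right h, norm_neg, norm_one] at hu
  exact lt_irrefl 1 hu

end Complex

open Complex

theorem stmt_18_general (γ β : ℝ) (hγ1 : γ < 1/10)
    (lam1 lam2 : ℂ) (h1 : lam1 ≠ 0) (h2 : lam2 ≠ 0)
    (hlog : ‖Complex.log (lam1 / lam2)‖ < β)
    (g1 g2 : ℂ → ℂ)
    (hg1 : ∀ w, g1 w = lam1 * Complex.exp w)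
    (hg2 : ∀ w, g2 w = lam2 * Complex.exp w)
    (y z z' : ℂ) (hz : z ≠ 0) (hz' : g1 z' = z)
    (hyz : ‖(y - z) / z‖ < γ) :
    ∃ y' : ℂ, g2 y' = y ∧
      ‖y' - z' - (y - z) / z‖ < 3 * γ ^ 2 + β := by
  set u := (y - z) / z
  have hu : ‖u‖ ≤ 1 / 2 := by linarith
  have hyu : y / z = 1 + u := by simp only [u, sub_div, div_self hz]; ring
  have hyz0 : y / z ≠ 0 := hyu ▸ one_add_ne_zero_of_norm_lt_one (by linarith)
  refine ⟨z' + log (y / z) + log (lam1 / lam2), ?_, ?_⟩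
  · rw [hg2, mul_exp_add_log_div h1 h2, exp_add, exp_log hyz0, ← mul_assoc, ← hg1, hz',
      mul_div_cancel₀ _ hz]
  · have h_rem : ‖log (1 + u) - u‖ < 3 * γ ^ 2 := by
      nlinarith [norm_log_one_add_sub_self_le_sq hu, norm_nonneg u]
    calc ‖z' + log (y / z) + log (lam1 / lam2) - z' - u‖
        = ‖(log (1 + u) - u) + log (lam1 / lam2)‖ := by rw [hyu]; ring_nf
      _ ≤ ‖log (1 + u) - u‖ + ‖log (lam1 / lam2)‖ := norm_add_le _ _
      _ < 3 * γ ^ 2 + β := add_lt_add h_rem hlog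

/-- for `γ, β ∈ (0, 1/10)`, `|log(λ1/λ2)| < β`,
`g_j(w) = λ_j·exp(w)`, if `g1(z') = z`, `z ≠ 0` and `|(y−z)/z| < γ`, then some
preimage `y'` of `y` under `g2` satisfies `|y' − z' − (y−z)/z| < 3γ² + β`. -/
theorem stmt_18 (γ β : ℝ) (hγ0 : 0 < γ) (hγ1 : γ < 1/10)
    (hβ0 : 0 < β) (hβ1 : β < 1/10)
    (lam1 lam2 : ℂ) (h1 : lam1 ≠ 0) (h2 : lam2 ≠ 0)
    (hlog : ‖Complex.log (lam1 / lam2)‖ < β)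
    (g1 g2 : ℂ → ℂ)
    (hg1 : ∀ w, g1 w = lam1 * Complex.exp w)
    (hg2 : ∀ w, g2 w = lam2 * Complex.exp w)
    (y z z' : ℂ) (hz : z ≠ 0) (hz' : g1 z' = z)
    (hyz : ‖(y - z) / z‖ < γ) :
    ∃ y' : ℂ, g2 y' = y ∧
      ‖y' - z' - (y - z) / z‖ < 3 * γ ^ 2 + β :=
  stmt_18_general γ β hγ1 lam1 lam2 h1 h2 hlog g1 g2 hg1 hg2 y z z' hz hz' hyz
end
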